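/- arXiv:2311.14042 — 3 statements merged into one kernel-verified Lean document; each statement's English description precedes it below -/
import Mathlib

section
/- Under the linear potential outcome model with balanced randomization, the bias of the Horvitz–Thompson estimator is E[τ̂] − τ = (γ/n) Σ_{i=1}^n ( Cov[z_i, Σ_{j∈N_i} z_j] / Var[z_i] − d_i ). -/
/-!
A `{0,1}`-valued assignment `x` with `p = E[x]` has `Var[x] = p (1 - p)`, so its
Horvitz–Thompson weight `x / p - (1 - x) / (1 - p)` satisfies
`E[(x / p - (1 - x) / (1 - p)) W] = Cov[x, W] / Var[x]` for every square-integrable outcome `W`.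
In the linear model `Cov[z_i, Y_i] = β_i Var[z_i] + γ Cov[z_i, ∑_{j ∈ N_i} z_j]`, hence
`E[τ̂] = (1/n) ∑_i (β_i + γ Cov[z_i, ∑_{j ∈ N_i} z_j] / Var[z_i])`, and subtracting `τ` leaves
the bias.
-/

open MeasureTheory ProbabilityTheory

section Bernoulli

variable {Ω : Type*} [MeasurableSpace Ω] {μ : Measure Ω} {x S W : Ω → ℝ}

lemma integrable_horvitzThompson_mul (hx : AEStronglyMeasurable x μ)
    (h01 : ∀ ω, x ω = 0 ∨ x ω = 1) (hW : Integrable W μ) (p q : ℝ) :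
    Integrable (fun ω => (x ω / p - (1 - x ω) / q) * W ω) μ :=
  hW.bdd_mul (c := |p⁻¹| + |q⁻¹|) (by fun_prop)
    (ae_of_all _ fun ω => by rcases h01 ω with h | h <;> simp [h])

variable [IsProbabilityMeasure μ]

lemma memLp_of_forall_eq_zero_or_eq_one (hx : AEStronglyMeasurable x μ)
    (h01 : ∀ ω, x ω = 0 ∨ x ω = 1) (p : ENNReal) : MemLp x p μ :=
  memLp_of_bounded (a := 0) (b := 1)
    (ae_of_all _ fun ω => by rcases h01 ω with h | h <;> simp [h]) hx p

lemma variance_eq_mul_one_sub_of_forall_eq_zero_or_eq_one (hx : AEStronglyMeasurable x μ)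
    (h01 : ∀ ω, x ω = 0 ∨ x ω = 1) : Var[x; μ] = μ[x] * (1 - μ[x]) := by
  have hsq : x ^ 2 = x := funext fun ω => by rcases h01 ω with h | h <;> simp [h]
  rw [variance_eq_sub (memLp_of_forall_eq_zero_or_eq_one hx h01 2), hsq]
  ring

lemma integral_horvitzThompson_mul (hx : AEStronglyMeasurable x μ)
    (h01 : ∀ ω, x ω = 0 ∨ x ω = 1) (hW : MemLp W 2 μ) (hp₀ : μ[x] ≠ 0) (hp₁ : μ[x] ≠ 1) :
    ∫ ω, (x ω / μ[x] - (1 - x ω) / ∫ ω', (1 - x ω') ∂μ) * W ω ∂μ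
      = cov[x, W; μ] / Var[x; μ] := by
  have hx₂ := memLp_of_forall_eq_zero_or_eq_one hx h01 2
  have hq : ∫ ω, (1 - x ω) ∂μ = 1 - μ[x] := by
    rw [integral_sub (integrable_const 1) (hx₂.integrable one_le_two)]
    simp
  have hq₀ : 1 - μ[x] ≠ 0 := sub_ne_zero.2 hp₁.symm
  have hxW : Integrable (fun ω => x ω * W ω) μ := hx₂.integrable_mul hW
  rw [hq, covariance_eq_sub hx₂ hW, variance_eq_mul_one_sub_of_forall_eq_zero_or_eq_one hx h01]
  simp only [Pi.mul_apply]
  calc ∫ ω, (x ω / μ[x] - (1 - x ω) / (1 - μ[x])) * W ω ∂μ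
      = ∫ ω, ((μ[x]⁻¹ + (1 - μ[x])⁻¹) * (x ω * W ω) - (1 - μ[x])⁻¹ * W ω) ∂μ := by
        congr with ω
        field_simp
        ring
    _ = (μ[x]⁻¹ + (1 - μ[x])⁻¹) * ∫ ω, x ω * W ω ∂μ - (1 - μ[x])⁻¹ * μ[W] := by
        rw [integral_sub (hxW.const_mul _) ((hW.integrable one_le_two).const_mul _),
          integral_const_mul, integral_const_mul]
    _ = (∫ ω, x ω * W ω ∂μ - μ[x] * μ[W]) / (μ[x] * (1 - μ[x])) := by
        field_simp
        ring

lemma covariance_linear_right (hx : MemLp x 2 μ) (hS : MemLp S 2 μ) (a b c : ℝ) :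
    cov[x, fun ω => a + b * x ω + c * S ω; μ] = b * Var[x; μ] + c * cov[x, S; μ] := by
  simp_rw [add_assoc]
  rw [covariance_const_add_right (Y := fun ω => b * x ω + c * S ω)
    (((hx.const_mul b).add (hS.const_mul c)).integrable one_le_two)]
  change cov[x, (fun ω => b * x ω) + (fun ω => c * S ω); μ] = _
  rw [covariance_add_right hx (hx.const_mul b) (hS.const_mul c), covariance_const_mul_right,
    covariance_const_mul_right, covariance_self hx.aemeasurable]

lemma integral_horvitzThompson_linear (hx : AEStronglyMeasurable x μ)
    (h01 : ∀ ω, x ω = 0 ∨ x ω = 1) (hS : MemLp S 2 μ) (hp₀ : μ[x] ≠ 0) (hp₁ : μ[x] ≠ 1)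
    (a b c : ℝ) :
    ∫ ω, (x ω / μ[x] - (1 - x ω) / ∫ ω', (1 - x ω') ∂μ) * (a + b * x ω + c * S ω) ∂μ
      = b + c * (cov[x, S; μ] / Var[x; μ]) := by
  have hx₂ := memLp_of_forall_eq_zero_or_eq_one hx h01 2
  have hvar : Var[x; μ] ≠ 0 := by
    rw [variance_eq_mul_one_sub_of_forall_eq_zero_or_eq_one hx h01]
    exact mul_ne_zero hp₀ (sub_ne_zero.2 hp₁.symm)
  have hW : MemLp (fun ω => a + b * x ω + c * S ω) 2 μ :=
    ((memLp_const a).add (hx₂.const_mul b)).add (hS.const_mul c)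
  rw [integral_horvitzThompson_mul hx h01 hW hp₀ hp₁, covariance_linear_right hx₂ hS]
  field_simp

end Bernoulli

theorem bias_HT_estimator_general {Ω : Type*} [MeasurableSpace Ω]
    (μ : Measure Ω) [IsProbabilityMeasure μ]
    (n : ℕ)
    (N : Fin n → Finset (Fin n)) (d : Fin n → ℕ)
    (α β : Fin n → ℝ) (γ : ℝ)
    (Y : (Fin n → ℝ) → Fin n → ℝ)
    (hY : ∀ z i, Y z i = α i + β i * z i + γ * ∑ j ∈ N i, z j)
    (z : Ω → Fin n → ℝ) (hmeas : Measurable z)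
    (hval : ∀ ω i, z ω i = 0 ∨ z ω i = 1)
    (hE : ∀ i, ∫ ω, z ω i ∂μ = 1 / 2)
    (τ : ℝ) (hτ : τ = (1 / (n : ℝ)) * ∑ i, (β i + γ * (d i : ℝ)))
    (τhat : Ω → ℝ)
    (hτhat : ∀ ω, τhat ω = (1 / (n : ℝ)) * ∑ i,
      (z ω i / (∫ ω', z ω' i ∂μ) - (1 - z ω i) / (∫ ω', (1 - z ω' i) ∂μ)) * Y (z ω) i) :
    (∫ ω, τhat ω ∂μ) - τ
      = (γ / (n : ℝ)) * ∑ i,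
          (((∫ ω, z ω i * ∑ j ∈ N i, z ω j ∂μ)
              - (∫ ω, z ω i ∂μ) * (∫ ω, (∑ j ∈ N i, z ω j) ∂μ))
            / ProbabilityTheory.variance (fun ω => z ω i) μ
            - (d i : ℝ)) := by
  simp_rw [hY] at hτhat
  have hz (i : Fin n) : AEStronglyMeasurable (fun ω => z ω i) μ :=
    ((measurable_pi_apply i).comp hmeas).aestronglyMeasurable
  have hz₂ (i : Fin n) : MemLp (fun ω => z ω i) 2 μ :=
    memLp_of_forall_eq_zero_or_eq_one (hz i) (hval · i) 2
  have hS (i : Fin n) : MemLp (fun ω => ∑ j ∈ N i, z ω j) 2 μ :=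
    memLp_finsetSum _ fun j _ => hz₂ j
  have hp (i : Fin n) : ∫ ω, z ω i ∂μ ≠ 0 ∧ ∫ ω, z ω i ∂μ ≠ 1 := by
    norm_num [hE]
  have hint (i : Fin n) : Integrable (fun ω => (z ω i / (∫ ω', z ω' i ∂μ)
      - (1 - z ω i) / (∫ ω', (1 - z ω' i) ∂μ)) * (α i + β i * z ω i + γ * ∑ j ∈ N i, z ω j)) μ :=
    integrable_horvitzThompson_mul (hz i) (hval · i)
      (((memLp_const (α i)).add ((hz₂ i).const_mul (β i))).add ((hS i).const_mul γ)
        |>.integrable one_le_two) _ _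
  rw [show τhat = _ from funext hτhat, integral_const_mul, integral_finsetSum _ fun i _ => hint i,
    hτ]
  simp_rw [integral_horvitzThompson_linear (hz _) (hval · _) (hS _) (hp _).1 (hp _).2,
    covariance_eq_sub (hz₂ _) (hS _)]
  simp only [Pi.mul_apply]
  rw [← mul_sub, ← Finset.sum_sub_distrib, Finset.mul_sum, Finset.mul_sum]
  exact Finset.sum_congr rfl fun i _ => by ring

/-- Under the linear potential outcome model with balanced randomization, the bias of
the Horvitz–Thompson estimator is
`E[τ̂] − τ = (γ/n) ∑_i (Cov[z_i, ∑_{j∈N_i} z_j] / Var[z_i] − d_i)`. -/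
theorem bias_HT_estimator {Ω : Type*} [MeasurableSpace Ω]
    (μ : Measure Ω) [IsProbabilityMeasure μ]
    (n : ℕ) (hn : 0 < n)
    (N : Fin n → Finset (Fin n)) (d : Fin n → ℕ) (hd : ∀ i, d i = (N i).card)
    (α β : Fin n → ℝ) (γ : ℝ)
    (Y : (Fin n → ℝ) → Fin n → ℝ)
    (hY : ∀ z i, Y z i = α i + β i * z i + γ * ∑ j ∈ N i, z j)
    (z : Ω → Fin n → ℝ) (hmeas : Measurable z)
    (hval : ∀ ω i, z ω i = 0 ∨ z ω i = 1)
    (hE : ∀ i, ∫ ω, z ω i ∂μ = 1 / 2)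
    (τ : ℝ) (hτ : τ = (1 / (n : ℝ)) * ∑ i, (β i + γ * (d i : ℝ)))
    (τhat : Ω → ℝ)
    (hτhat : ∀ ω, τhat ω = (1 / (n : ℝ)) * ∑ i,
      (z ω i / (∫ ω', z ω' i ∂μ) - (1 - z ω i) / (∫ ω', (1 - z ω' i) ∂μ)) * Y (z ω) i) :
    (∫ ω, τhat ω ∂μ) - τ
      = (γ / (n : ℝ)) * ∑ i,
          (((∫ ω, z ω i * ∑ j ∈ N i, z ω j ∂μ)
              - (∫ ω, z ω i ∂μ) * (∫ ω, (∑ j ∈ N i, z ω j) ∂μ))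
            / ProbabilityTheory.variance (fun ω => z ω i) μ
            - (d i : ℝ)) :=
  bias_HT_estimator_general μ n N d α β γ Y hY z hmeas hval hE τ hτ τhat hτhat
end

section
/- Under graph cluster randomization with balanced cluster-level treatments, the bias of the Horvitz–Thompson estimator equals (γ/n)·(4·trace(C·Cov[t]) − Σ_{i,j∈[K]} C_{ij}), where C_{ij} counts edges between clusters S_i and S_j. -/
/-!
With propensity `1/2` the Horvitz–Thompson weight of a binary treatment `X` is `4X - 2`, so
`E[(4X - 2) W] = 4 Cov(X, W)`. In the linear-in-means model
`Cov(z_i, Y_i) = β_i Var(z_i) + γ ∑_{j ∈ N_i} Cov(z_i, z_j)` with `Var(z_i) = 1/4`, so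
unit `i` contributes `β_i + γ ∑_{j ∈ N_i} 4 Cov(t_{c i}, t_{c j})` to `E[τ̂]` against
`β_i + γ d_i` to `τ`.
Grouping the edges `(i, j)` by the pair of clusters they join turns
`∑_i ∑_{j ∈ N_i} (4 Cov(t_{c i}, t_{c j}) - 1)` into `∑_{k,l} C_{kl} (4 Cov_{kl} - 1)`.
-/

open MeasureTheory ProbabilityTheory Finset

theorem Matrix.trace_mul_of_isSymm {n R : Type*} [Fintype n] [AddCommMonoid R] [Mul R]
    (A B : Matrix n n R) (hB : B.IsSymm) : (A * B).trace = ∑ i, ∑ j, A i j * B i j := by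
  simp only [Matrix.trace, Matrix.diag, Matrix.mul_apply, hB.apply]

section Regrouping

variable {V κ M : Type*} [Fintype V] [DecidableEq κ]

def clusterEdgeCount (c : V → κ) (N : V → Finset V) (k l : κ) : ℕ :=
  ∑ u ∈ univ.filter (fun u => c u = k), ((N u).filter (fun v => c v = l)).card

theorem sum_sum_neighbors_eq_sum_clusterEdgeCount_nsmul [Fintype κ] [AddCommMonoid M]
    (c : V → κ) (N : V → Finset V) (f : κ → κ → M) :
    ∑ u, ∑ v ∈ N u, f (c u) (c v) = ∑ k, ∑ l, clusterEdgeCount c N k l • f k l := by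
  have inner (u : V) (a : κ) : ∑ v ∈ N u, f a (c v)
      = ∑ l, ((N u).filter (fun v => c v = l)).card • f a l := by
    rw [← sum_fiberwise (N u) c]
    refine sum_congr rfl fun l _ => ?_
    rw [sum_congr rfl fun v hv => by rw [(mem_filter.1 hv).2], sum_const]
  calc ∑ u, ∑ v ∈ N u, f (c u) (c v)
      = ∑ k, ∑ u ∈ univ.filter (fun u => c u = k), ∑ v ∈ N u, f k (c v) := by
        rw [← sum_fiberwise univ c]
        exact sum_congr rfl fun k _ => sum_congr rfl fun u hu => by rw [(mem_filter.1 hu).2]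
    _ = ∑ k, ∑ l, clusterEdgeCount c N k l • f k l := by
        simp only [inner, clusterEdgeCount, sum_smul]
        exact sum_congr rfl fun k _ => sum_comm

end Regrouping

section HorvitzThompson

variable {Ω : Type*} [MeasurableSpace Ω] {μ : Measure Ω} {X W : Ω → ℝ}

noncomputable def horvitzThompsonWeight (μ : Measure Ω) (X : Ω → ℝ) (ω : Ω) : ℝ :=
  X ω / μ[X] - (1 - X ω) / ∫ ω', (1 - X ω') ∂μ

theorem memLp_of_forall_eq_zero_or_one [IsFiniteMeasure μ] (hX : AEStronglyMeasurable X μ)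
    (h01 : ∀ ω, X ω = 0 ∨ X ω = 1) (p : ENNReal) : MemLp X p μ :=
  MemLp.of_bound hX 1 <| ae_of_all _ fun ω => by rcases h01 ω with h | h <;> simp [h]

theorem covariance_self_of_forall_eq_zero_or_one [IsProbabilityMeasure μ] (hX : MemLp X 2 μ)
    (h01 : ∀ ω, X ω = 0 ∨ X ω = 1) : cov[X, X; μ] = μ[X] - μ[X] ^ 2 := by
  have hXX : X * X = X := funext fun ω => by rcases h01 ω with h | h <;> simp [h]
  rw [covariance_eq_sub hX hX, hXX, sq]

theorem integrable_horvitzThompsonWeight_mul [IsFiniteMeasure μ] (hX : MemLp X 2 μ)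
    (hW : MemLp W 2 μ) :
    Integrable (fun ω => horvitzThompsonWeight μ X ω * W ω) μ := by
  have hweight : MemLp (horvitzThompsonWeight μ X) 2 μ := by
    unfold horvitzThompsonWeight
    simp_rw [div_eq_mul_inv]
    exact (hX.mul_const _).sub (((memLp_const 1).sub hX).mul_const _)
  exact hweight.integrable_mul hW

theorem integral_horvitzThompsonWeight_mul [IsProbabilityMeasure μ] (hX : MemLp X 2 μ)
    (hW : MemLp W 2 μ) (hmean : μ[X] = 1 / 2) :
    ∫ ω, horvitzThompsonWeight μ X ω * W ω ∂μ = 4 * cov[X, W; μ] := by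
  have hcompl : ∫ ω, (1 - X ω) ∂μ = 1 / 2 := by
    rw [integral_sub (integrable_const 1) (hX.integrable one_le_two), integral_const, hmean]
    norm_num
  have hweight : (fun ω => horvitzThompsonWeight μ X ω * W ω)
      = fun ω => 4 * (X ω * W ω) - 2 * W ω := by
    funext ω
    rw [horvitzThompsonWeight, hmean, hcompl]
    ring
  have hXW : Integrable (fun ω => X ω * W ω) μ := hX.integrable_mul hW
  rw [hweight, integral_sub (hXW.const_mul 4) ((hW.integrable one_le_two).const_mul 2),
    integral_const_mul, integral_const_mul, covariance_eq_sub hX hW, hmean]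
  simp only [Pi.mul_apply]
  ring

end HorvitzThompson

section LinearOutcomes

variable {Ω ι : Type*} [MeasurableSpace Ω] {μ : Measure Ω} [IsProbabilityMeasure μ]

theorem memLp_linear_outcome {z : ι → Ω → ℝ} (hz : ∀ j, MemLp (z j) 2 μ) (i : ι)
    (S : Finset ι) (a b γ : ℝ) :
    MemLp (fun ω => a + b * z i ω + γ * ∑ j ∈ S, z j ω) 2 μ :=
  ((memLp_const a).add ((hz i).const_mul b)).add ((memLp_finsetSum S fun j _ => hz j).const_mul γ)

theorem covariance_linear_outcome {z : ι → Ω → ℝ} (hz : ∀ j, MemLp (z j) 2 μ) (i : ι)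
    (S : Finset ι) (a b γ : ℝ) :
    cov[z i, fun ω => a + b * z i ω + γ * ∑ j ∈ S, z j ω; μ]
      = b * cov[z i, z i; μ] + γ * ∑ j ∈ S, cov[z i, z j; μ] := by
  have hdirect : MemLp (fun ω => b * z i ω) 2 μ := (hz i).const_mul b
  have hspill : MemLp (fun ω => γ * ∑ j ∈ S, z j ω) 2 μ :=
    (memLp_finsetSum S fun j _ => hz j).const_mul γ
  rw [show (fun ω => a + b * z i ω + γ * ∑ j ∈ S, z j ω)
      = fun ω => a + ((fun ω => b * z i ω) + (fun ω => γ * ∑ j ∈ S, z j ω)) ω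
      from funext fun ω => add_assoc _ _ _,
    covariance_const_add_right ((hdirect.add hspill).integrable one_le_two),
    covariance_add_right (hz i) hdirect hspill, covariance_const_mul_right,
    covariance_const_mul_right, covariance_fun_sum_right' (fun j _ => hz j) (hz i)]

theorem integral_horvitzThompsonWeight_mul_linear_outcome {z : ι → Ω → ℝ}
    (hz : ∀ j, MemLp (z j) 2 μ) {i : ι} (h01 : ∀ ω, z i ω = 0 ∨ z i ω = 1)
    (hmean : μ[z i] = 1 / 2) (S : Finset ι) (a b γ : ℝ) :
    ∫ ω, horvitzThompsonWeight μ (z i) ω * (a + b * z i ω + γ * ∑ j ∈ S, z j ω) ∂μ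
      = b + γ * ∑ j ∈ S, 4 * cov[z i, z j; μ] := by
  rw [integral_horvitzThompsonWeight_mul (hz i) (memLp_linear_outcome hz i S a b γ) hmean,
    covariance_linear_outcome hz, covariance_self_of_forall_eq_zero_or_one (hz i) h01, hmean,
    ← mul_sum]
  ring

end LinearOutcomes

theorem bias_HT_cluster_randomization_general {Ω : Type*} [MeasurableSpace Ω]
    (μ : Measure Ω) [IsProbabilityMeasure μ]
    (n K : ℕ)
    (N : Fin n → Finset (Fin n)) (d : Fin n → ℕ) (hd : ∀ i, d i = (N i).card)
    (α β : Fin n → ℝ) (γ : ℝ)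
    (Y : (Fin n → ℝ) → Fin n → ℝ)
    (hY : ∀ z i, Y z i = α i + β i * z i + γ * ∑ j ∈ N i, z j)
    -- cluster membership map: unit `i` belongs to cluster `c i`
    (c : Fin n → Fin K)
    -- cluster-level treatments, balanced
    (t : Ω → Fin K → ℝ) (hmeas : Measurable t)
    (hval : ∀ ω k, t ω k = 0 ∨ t ω k = 1)
    (hE : ∀ k, ∫ ω, t ω k ∂μ = 1 / 2)
    -- unit-level treatments given by graph cluster randomization
    (z : Ω → Fin n → ℝ) (hz : ∀ ω i, z ω i = t ω (c i))
    -- edge-count matrix between clusters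
    (C : Matrix (Fin K) (Fin K) ℝ)
    (hC : ∀ k l, C k l = ∑ u ∈ Finset.univ.filter (fun u => c u = k),
        (((N u).filter (fun v => c v = l)).card : ℝ))
    -- covariance matrix of the cluster treatment vector
    (Covt : Matrix (Fin K) (Fin K) ℝ)
    (hCovt : ∀ k l, Covt k l
      = (∫ ω, t ω k * t ω l ∂μ) - (∫ ω, t ω k ∂μ) * (∫ ω, t ω l ∂μ))
    (τ : ℝ) (hτ : τ = (1 / (n : ℝ)) * ∑ i, (β i + γ * (d i : ℝ)))
    (τhat : Ω → ℝ)
    (hτhat : ∀ ω, τhat ω = (1 / (n : ℝ)) * ∑ i,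
      (z ω i / (∫ ω', z ω' i ∂μ) - (1 - z ω i) / (∫ ω', (1 - z ω' i) ∂μ)) * Y (z ω) i) :
    (∫ ω, τhat ω ∂μ) - τ
      = (γ / (n : ℝ)) * (4 * Matrix.trace (C * Covt) - ∑ k, ∑ l, C k l) := by
  have ht : ∀ k, MemLp (fun ω => t ω k) 2 μ := fun k => memLp_of_forall_eq_zero_or_one
    ((measurable_pi_apply k).comp hmeas).aestronglyMeasurable (fun ω => hval ω k) 2
  have hCov : ∀ k l, Covt k l = cov[fun ω => t ω k, fun ω => t ω l; μ] := fun k l => by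
    rw [hCovt, covariance_eq_sub (ht k) (ht l)]
    rfl
  have hT : ∀ i, MemLp (fun ω => t ω (c i)) 2 μ := fun i => ht (c i)
  have hτhat' : τhat = fun ω => (1 / (n : ℝ)) *
      ∑ i, horvitzThompsonWeight μ (fun ω => t ω (c i)) ω
        * (α i + β i * t ω (c i) + γ * ∑ j ∈ N i, t ω (c j)) := by
    funext ω
    simp only [hτhat, hY, hz]
    rfl
  have hmean : ∫ ω, τhat ω ∂μ
      = (1 / (n : ℝ)) * ∑ i, (β i + γ * ∑ j ∈ N i, 4 * Covt (c i) (c j)) := by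
    rw [hτhat', integral_const_mul, integral_finsetSum _ fun i _ =>
      integrable_horvitzThompsonWeight_mul (hT i) (memLp_linear_outcome hT i _ _ _ _)]
    simp only [hCov]
    exact congrArg _ (sum_congr rfl fun i _ => integral_horvitzThompsonWeight_mul_linear_outcome
      hT (fun ω => hval ω (c i)) (hE (c i)) _ _ _ _)
  have hrow : ∀ i, ∑ j ∈ N i, (4 * Covt (c i) (c j) - 1)
      = ∑ j ∈ N i, 4 * Covt (c i) (c j) - d i := fun i => by
    rw [sum_sub_distrib, sum_const, hd, nsmul_one]
  have hsymm : Covt.IsSymm := Matrix.IsSymm.ext fun k l => by rw [hCov, hCov, covariance_comm]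
  calc (∫ ω, τhat ω ∂μ) - τ
        = γ / n * ∑ i, ∑ j ∈ N i, (4 * Covt (c i) (c j) - 1) := by
        rw [hmean, hτ, ← mul_sub, ← sum_sub_distrib, mul_sum, mul_sum]
        simp only [hrow]
        exact sum_congr rfl fun i _ => by ring
    _ = γ / n * ∑ k, ∑ l, C k l * (4 * Covt k l - 1) := by
        rw [sum_sum_neighbors_eq_sum_clusterEdgeCount_nsmul c N fun k l => 4 * Covt k l - 1]
        simp only [hC, clusterEdgeCount, nsmul_eq_mul, Nat.cast_sum]
    _ = γ / n * (4 * Matrix.trace (C * Covt) - ∑ k, ∑ l, C k l) := by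
        rw [Matrix.trace_mul_of_isSymm C Covt hsymm, mul_sum]
        simp only [mul_sub, mul_one, sum_sub_distrib, mul_sum, mul_left_comm]

/-- Under graph cluster randomization with balanced cluster-level treatments, the bias
of the Horvitz–Thompson estimator equals
`(γ/n)·(4·trace(C·Cov[t]) − ∑_{i,j∈[K]} C_{ij})`, where `C_{kl}` counts the (directed)
edges from cluster `S_k` to cluster `S_l`. -/
theorem bias_HT_cluster_randomization {Ω : Type*} [MeasurableSpace Ω]
    (μ : Measure Ω) [IsProbabilityMeasure μ]
    (n K : ℕ) (hn : 0 < n)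
    (N : Fin n → Finset (Fin n)) (d : Fin n → ℕ) (hd : ∀ i, d i = (N i).card)
    (α β : Fin n → ℝ) (γ : ℝ)
    (Y : (Fin n → ℝ) → Fin n → ℝ)
    (hY : ∀ z i, Y z i = α i + β i * z i + γ * ∑ j ∈ N i, z j)
    -- cluster membership map: unit `i` belongs to cluster `c i`
    (c : Fin n → Fin K)
    -- cluster-level treatments, balanced
    (t : Ω → Fin K → ℝ) (hmeas : Measurable t)
    (hval : ∀ ω k, t ω k = 0 ∨ t ω k = 1)
    (hE : ∀ k, ∫ ω, t ω k ∂μ = 1 / 2)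
    -- unit-level treatments given by graph cluster randomization
    (z : Ω → Fin n → ℝ) (hz : ∀ ω i, z ω i = t ω (c i))
    -- edge-count matrix between clusters
    (C : Matrix (Fin K) (Fin K) ℝ)
    (hC : ∀ k l, C k l = ∑ u ∈ Finset.univ.filter (fun u => c u = k),
        (((N u).filter (fun v => c v = l)).card : ℝ))
    -- covariance matrix of the cluster treatment vector
    (Covt : Matrix (Fin K) (Fin K) ℝ)
    (hCovt : ∀ k l, Covt k l
      = (∫ ω, t ω k * t ω l ∂μ) - (∫ ω, t ω k ∂μ) * (∫ ω, t ω l ∂μ))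
    (τ : ℝ) (hτ : τ = (1 / (n : ℝ)) * ∑ i, (β i + γ * (d i : ℝ)))
    (τhat : Ω → ℝ)
    (hτhat : ∀ ω, τhat ω = (1 / (n : ℝ)) * ∑ i,
      (z ω i / (∫ ω', z ω' i ∂μ) - (1 - z ω i) / (∫ ω', (1 - z ω' i) ∂μ)) * Y (z ω) i) :
    (∫ ω, τhat ω ∂μ) - τ
      = (γ / (n : ℝ)) * (4 * Matrix.trace (C * Covt) - ∑ k, ∑ l, C k l) :=
  bias_HT_cluster_randomization_general μ n K N d hd α β γ Y hY c t hmeas hval hE z hz C hC Covt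
    hCovt τ hτ τhat hτhat
end

section
/- Let t be random in {0,1}^K with E[t_k] = 1/2, h, d ∈ R^K with |h_k| ≤ ωγ d_k for all k (ω, γ > 0), and C an entrywise-nonnegative matrix with C𝟏 = d. Then Var[(2/n)(hᵀt + 2γ tᵀCt)] ≤ (8γ²(ω²+4)/n²)·trace(d dᵀ (Cov[t] + (1/4)𝟏𝟏ᵀ)). -/
open MeasureTheory ProbabilityTheory

lemma integrable_of_bdd {Ω : Type*} [MeasurableSpace Ω] (μ : Measure Ω)
    [IsProbabilityMeasure μ] {f : Ω → ℝ} (hf : Measurable f) (M : ℝ)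
    (hM : ∀ ω, |f ω| ≤ M) : Integrable f μ :=
  (integrable_const M).mono' hf.aestronglyMeasurable
    (Filter.Eventually.of_forall (by simpa [Real.norm_eq_abs] using hM))

/-- **Variance upper bound.** Let `t` be random in `{0,1}^K` with `E[t_k] = 1/2`,
`|h_k| ≤ ωγ d_k` for all `k` (with `ω, γ > 0`), and `C` an entrywise-nonnegative matrix
with `C𝟏 = d`. Then
`Var[(2/n)(hᵀt + 2γ tᵀCt)] ≤ (8γ²(ω²+4)/n²)·trace(d dᵀ (Cov[t] + (1/4)𝟏𝟏ᵀ))`. -/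
theorem variance_upper_bound {Ω : Type*} [MeasurableSpace Ω]
    (μ : Measure Ω) [IsProbabilityMeasure μ]
    (K : ℕ) (hK : 1 ≤ K) (n ω γ : ℝ) (hn : 0 < n) (hω : 0 < ω) (hγ : 0 < γ)
    (t : Ω → Fin K → ℝ) (hmeas : Measurable t)
    (hval : ∀ ω' k, t ω' k = 0 ∨ t ω' k = 1)
    (hE : ∀ k, ∫ ω', t ω' k ∂μ = 1 / 2)
    (C : Matrix (Fin K) (Fin K) ℝ) (hC : ∀ i j, 0 ≤ C i j)
    (d : Fin K → ℝ) (hd : ∀ k, d k = ∑ l, C k l)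
    (h : Fin K → ℝ) (hh : ∀ k, |h k| ≤ ω * γ * d k)
    (τhat : Ω → ℝ)
    (hτhat : ∀ ω', τhat ω' = (2 / n) * ((∑ k, h k * t ω' k)
        + 2 * γ * ∑ k, ∑ l, t ω' k * C k l * t ω' l)) :
    ProbabilityTheory.variance τhat μ
      ≤ (8 * γ ^ 2 * (ω ^ 2 + 4) / n ^ 2) *
          ∑ k, ∑ l, d k * d l *
            (((∫ ω', t ω' k * t ω' l ∂μ)
                - (∫ ω', t ω' k ∂μ) * (∫ ω', t ω' l ∂μ)) + 1 / 4) := by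
  have ht0 : ∀ ω' k, 0 ≤ t ω' k := by
    intro ω' k; rcases hval ω' k with h1 | h1 <;> simp [h1]
  have ht1 : ∀ ω' k, t ω' k ≤ 1 := by
    intro ω' k; rcases hval ω' k with h1 | h1 <;> simp [h1]
  have hd0 : ∀ k, 0 ≤ d k := by
    intro k; rw [hd]; exact Finset.sum_nonneg fun l _ => hC k l
  have htk : ∀ k, Measurable fun ω' => t ω' k := fun k => (measurable_pi_apply k).comp hmeas
  set S : Ω → ℝ := fun ω' => ∑ k, d k * t ω' k with hSdef
  have hSmeas : Measurable S := Finset.measurable_sum _ fun k _ => (htk k).const_mul _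
  have hS0 : ∀ ω', 0 ≤ S ω' :=
    fun ω' => Finset.sum_nonneg fun k _ => mul_nonneg (hd0 k) (ht0 ω' k)
  have hSle : ∀ ω', S ω' ≤ ∑ k, d k := by
    intro ω'
    exact Finset.sum_le_sum fun k _ => by
      nlinarith [hd0 k, ht1 ω' k, ht0 ω' k]
  set c : ℝ := 8 * γ ^ 2 * (ω ^ 2 + 4) / n ^ 2 with hcdef
  have hc0 : 0 ≤ c := by positivity
  -- pointwise bound
  have hpt : ∀ ω', (τhat ω') ^ 2 ≤ c * (S ω') ^ 2 := by
    intro ω'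
    set a : ℝ := ∑ k, h k * t ω' k with hadef
    set b : ℝ := ∑ k, ∑ l, t ω' k * C k l * t ω' l with hbdef
    have ha : |a| ≤ ω * γ * S ω' := by
      calc |a| ≤ ∑ k, |h k * t ω' k| := Finset.abs_sum_le_sum_abs _ _
        _ ≤ ∑ k, ω * γ * d k * t ω' k := by
            refine Finset.sum_le_sum fun k _ => ?_
            rw [abs_mul, abs_of_nonneg (ht0 ω' k)]
            exact mul_le_mul_of_nonneg_right (hh k) (ht0 ω' k)
        _ = ω * γ * S ω' := by
            rw [hSdef, Finset.mul_sum]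
            exact Finset.sum_congr rfl fun k _ => by ring
    have hb0 : 0 ≤ b :=
      Finset.sum_nonneg fun k _ => Finset.sum_nonneg fun l _ =>
        mul_nonneg (mul_nonneg (ht0 ω' k) (hC k l)) (ht0 ω' l)
    have hbS : b ≤ S ω' := by
      refine Finset.sum_le_sum fun k _ => ?_
      calc ∑ l, t ω' k * C k l * t ω' l ≤ ∑ l, t ω' k * C k l := by
            refine Finset.sum_le_sum fun l _ => ?_
            have := mul_nonneg (ht0 ω' k) (hC k l)
            nlinarith [ht1 ω' l]
        _ = d k * t ω' k := by rw [hd, Finset.sum_mul]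
                               exact Finset.sum_congr rfl fun l _ => mul_comm _ _
    have ha2 : a ^ 2 ≤ (ω * γ * S ω') ^ 2 := by
      rw [← sq_abs a]; exact pow_le_pow_left₀ (abs_nonneg a) ha 2
    have hb2 : b ^ 2 ≤ (S ω') ^ 2 := pow_le_pow_left₀ hb0 hbS 2
    have key : 4 * (a + 2 * γ * b) ^ 2 ≤ 8 * γ ^ 2 * (ω ^ 2 + 4) * (S ω') ^ 2 := by
      nlinarith [sq_nonneg (a - 2 * γ * b), ha2, hb2, sq_nonneg (S ω'), sq_nonneg γ]
    have hn2 : (0:ℝ) < n ^ 2 := by positivity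
    rw [hτhat ω']
    calc (2 / n * (a + 2 * γ * b)) ^ 2 = 4 * (a + 2 * γ * b) ^ 2 / n ^ 2 := by
          field_simp; ring
      _ ≤ 8 * γ ^ 2 * (ω ^ 2 + 4) * (S ω') ^ 2 / n ^ 2 := by gcongr
      _ = c * (S ω') ^ 2 := by rw [hcdef]; ring
  -- measurability of τhat
  have hτmeas : Measurable τhat := by
    have : τhat = fun ω' => (2 / n) * ((∑ k, h k * t ω' k)
        + 2 * γ * ∑ k, ∑ l, t ω' k * C k l * t ω' l) := funext hτhat
    rw [this]
    exact (((Finset.measurable_sum _ fun k _ => (htk k).const_mul (h k)).add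
      ((Finset.measurable_sum _ fun k _ => Finset.measurable_sum _ fun l _ =>
        ((htk k).mul_const (C k l)).mul (htk l)).const_mul (2 * γ))).const_mul (2 / n))
  -- integrability of c * S^2
  have hintS : Integrable (fun ω' => c * (S ω') ^ 2) μ := by
    refine integrable_of_bdd μ ((hSmeas.pow_const 2).const_mul c) (c * (∑ k, d k) ^ 2) ?_
    intro ω'
    have hS2 : (S ω') ^ 2 ≤ (∑ k, d k) ^ 2 := pow_le_pow_left₀ (hS0 ω') (hSle ω') 2
    rw [abs_of_nonneg (by positivity)]
    exact mul_le_mul_of_nonneg_left hS2 hc0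
  have hintkl : ∀ k l : Fin K,
      Integrable (fun ω' => d k * t ω' k * (d l * t ω' l)) μ := by
    intro k l
    refine integrable_of_bdd μ (((htk k).const_mul (d k)).mul ((htk l).const_mul (d l)))
      (d k * d l) ?_
    intro ω'
    have h1 : 0 ≤ d k * t ω' k := mul_nonneg (hd0 k) (ht0 ω' k)
    have h2 : 0 ≤ d l * t ω' l := mul_nonneg (hd0 l) (ht0 ω' l)
    rw [abs_of_nonneg (mul_nonneg h1 h2)]
    have e1 : d k * t ω' k ≤ d k := by nlinarith [hd0 k, ht1 ω' k]
    have e2 : d l * t ω' l ≤ d l := by nlinarith [hd0 l, ht1 ω' l]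
    exact mul_le_mul e1 e2 h2 (hd0 k)
  -- expand ∫ S^2
  have hS2expand : ∫ ω', (S ω') ^ 2 ∂μ
      = ∑ k, ∑ l, d k * d l * ∫ ω', t ω' k * t ω' l ∂μ := by
    have heq : ∀ ω', (S ω') ^ 2 = ∑ k, ∑ l, d k * t ω' k * (d l * t ω' l) := by
      intro ω'; rw [hSdef]; simp only [sq, Finset.sum_mul_sum]
    calc ∫ ω', (S ω') ^ 2 ∂μ
        = ∫ ω', ∑ k, ∑ l, d k * t ω' k * (d l * t ω' l) ∂μ := by
          exact integral_congr_ae (Filter.Eventually.of_forall heq)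
      _ = ∑ k, ∫ ω', ∑ l, d k * t ω' k * (d l * t ω' l) ∂μ := by
          exact integral_finset_sum _ fun k _ => integrable_finset_sum _ fun l _ => hintkl k l
      _ = ∑ k, ∑ l, ∫ ω', d k * t ω' k * (d l * t ω' l) ∂μ := by
          exact Finset.sum_congr rfl fun k _ => integral_finset_sum _ fun l _ => hintkl k l
      _ = ∑ k, ∑ l, d k * d l * ∫ ω', t ω' k * t ω' l ∂μ := by
          refine Finset.sum_congr rfl fun k _ => Finset.sum_congr rfl fun l _ => ?_
          rw [← integral_const_mul]
          exact integral_congr_ae (Filter.Eventually.of_forall fun ω' => by ring)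
  -- rewrite RHS
  have hRHS : ∑ k, ∑ l, d k * d l *
      (((∫ ω', t ω' k * t ω' l ∂μ)
          - (∫ ω', t ω' k ∂μ) * (∫ ω', t ω' l ∂μ)) + 1 / 4)
      = ∑ k, ∑ l, d k * d l * ∫ ω', t ω' k * t ω' l ∂μ := by
    refine Finset.sum_congr rfl fun k _ => Finset.sum_congr rfl fun l _ => ?_
    rw [hE k, hE l]; ring
  rw [hRHS]
  calc variance τhat μ ≤ ∫ ω', (τhat ω') ^ 2 ∂μ := by
        simpa using variance_le_expectation_sq (μ := μ) hτmeas.aestronglyMeasurable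
    _ ≤ ∫ ω', c * (S ω') ^ 2 ∂μ :=
        integral_mono_of_nonneg (Filter.Eventually.of_forall fun ω' => sq_nonneg _)
          hintS (Filter.Eventually.of_forall hpt)
    _ = c * ∫ ω', (S ω') ^ 2 ∂μ := integral_const_mul c _
    _ = c * ∑ k, ∑ l, d k * d l * ∫ ω', t ω' k * t ω' l ∂μ := by rw [hS2expand]
end
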